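/- Let c₀ ∈ ℝ and c₁, c₂, c₃, A₁, A₂ > 0, and let γ be a real number with 2 ≤ γ ≤ 4. Then the function f(z) = c₀ + c₁/z + c₂·(z−1)/log(1 + A₁·z^(1−γ/2)) + c₃/(z·log(1 + A₂/z)) is strictly convex on (0,∞). -/

import Mathlib

/-!
The first summand is strictly convex and the other two are convex. The last one is the
reciprocal of the positive concave function `z log (1 + A₂ / z)`, whose second derivative is
`-A₂² / (z (z + A₂)²)`. For the middle one put `α = 1 - γ / 2 ∈ [-1, 0]`, `u = A₁ z ^ α` and
`L = log (1 + u)`; then `z u' = α u`, and the second derivative of `(z - 1) / L` is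
`-α u ((z + 1)(1 + u) L + α (z - 1)(L - 2u)) / (z² (1 + u)² L³)`. Since `α (z - 1) ≤ z + 1` and
`L ≤ 2u`, the bracket is at least `(z + 1)((2 + u) L - 2u)`, which is nonnegative by
`log (1 + u) ≥ 2u / (u + 2)`.
-/

open Set Filter Topology Real

section SecondDerivativeTest

variable {D : Set ℝ} {f f' f'' : ℝ → ℝ}

lemma convexOn_of_hasDerivAt2_nonneg (hD : Convex ℝ D) (hDo : IsOpen D)
    (hf : ∀ x ∈ D, HasDerivAt f (f' x) x) (hf' : ∀ x ∈ D, HasDerivAt f' (f'' x) x)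
    (hf'' : ∀ x ∈ D, 0 ≤ f'' x) : ConvexOn ℝ D f := by
  refine convexOn_of_hasDerivWithinAt2_nonneg (f' := f') (f'' := f'') hD
    (HasDerivAt.continuousOn hf) ?_ ?_ ?_ <;> rw [hDo.interior_eq]
  · exact fun x hx => (hf x hx).hasDerivWithinAt
  · exact fun x hx => (hf' x hx).hasDerivWithinAt
  · exact hf''

lemma concaveOn_of_hasDerivAt2_nonpos (hD : Convex ℝ D) (hDo : IsOpen D)
    (hf : ∀ x ∈ D, HasDerivAt f (f' x) x) (hf' : ∀ x ∈ D, HasDerivAt f' (f'' x) x)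
    (hf'' : ∀ x ∈ D, f'' x ≤ 0) : ConcaveOn ℝ D f := by
  refine concaveOn_of_hasDerivWithinAt2_nonpos (f' := f') (f'' := f'') hD
    (HasDerivAt.continuousOn hf) ?_ ?_ ?_ <;> rw [hDo.interior_eq]
  · exact fun x hx => (hf x hx).hasDerivWithinAt
  · exact fun x hx => (hf' x hx).hasDerivWithinAt
  · exact hf''

lemma strictConvexOn_of_hasDerivAt2_pos (hD : Convex ℝ D) (hDo : IsOpen D)
    (hf : ∀ x ∈ D, HasDerivAt f (f' x) x) (hf' : ∀ x ∈ D, HasDerivAt f' (f'' x) x)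
    (hf'' : ∀ x ∈ D, 0 < f'' x) : StrictConvexOn ℝ D f := by
  refine strictConvexOn_of_deriv2_pos hD (HasDerivAt.continuousOn hf) fun x hx => ?_
  rw [hDo.interior_eq] at hx
  have hderiv : deriv f =ᶠ[𝓝 x] f' :=
    eventually_of_mem (hDo.mem_nhds hx) fun y hy => (hf y hy).deriv
  simpa [hderiv.deriv_eq, (hf' x hx).deriv] using hf'' x hx

end SecondDerivativeTest

lemma ConcaveOn.convexOn_inv {E : Type*} [AddCommMonoid E] [Module ℝ E] {s : Set E}
    {g : E → ℝ} (hg : ConcaveOn ℝ s g) (hg₀ : ∀ x ∈ s, 0 < g x) :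
    ConvexOn ℝ s fun x => (g x)⁻¹ := by
  refine ⟨hg.1, fun x hx y hy a b ha hb hab => ?_⟩
  have hinv : ConvexOn ℝ (Ioi 0) fun t : ℝ => t⁻¹ := by
    simpa only [zpow_neg_one] using convexOn_zpow (𝕜 := ℝ) (-1)
  have hmix : a • g x + b • g y ∈ Ioi 0 := convex_Ioi 0 (hg₀ x hx) (hg₀ y hy) ha hb hab
  calc (g (a • x + b • y))⁻¹ ≤ (a • g x + b • g y)⁻¹ :=
        inv_anti₀ hmix (hg.2 hx hy ha hb hab)
    _ ≤ a • (g x)⁻¹ + b • (g y)⁻¹ := hinv.2 (hg₀ x hx) (hg₀ y hy) ha hb hab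

lemma strictConvexOn_const_add_div (c₀ : ℝ) {c₁ : ℝ} (hc₁ : 0 < c₁) :
    StrictConvexOn ℝ (Ioi 0) fun z : ℝ => c₀ + c₁ / z := by
  refine strictConvexOn_of_hasDerivAt2_pos (convex_Ioi 0) isOpen_Ioi
    (f' := fun z => -c₁ / z ^ 2) (f'' := fun z => 2 * c₁ / z ^ 3) (fun z (hz : 0 < z) => ?_)
    (fun z (hz : 0 < z) => ?_) (fun z (hz : 0 < z) => by positivity)
  · exact (((hasDerivAt_const z c₁).div (hasDerivAt_id z) hz.ne').const_add c₀).congr_deriv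
      (by simp only [id]; ring)
  · refine ((hasDerivAt_const z (-c₁)).div (hasDerivAt_pow 2 z) (by positivity)).congr_deriv ?_
    field_simp
    ring

lemma hasDerivAt_log_one_add_div {A z : ℝ} (hA : 0 ≤ A) (hz : 0 < z) :
    HasDerivAt (fun z => log (1 + A / z)) (-A / (z * (z + A))) z := by
  have hpos : 0 < 1 + A / z := by positivity
  refine ((((hasDerivAt_const z A).div (hasDerivAt_id z) hz.ne').const_add 1).log
    hpos.ne').congr_deriv ?_
  dsimp
  field_simp
  ring

lemma concaveOn_mul_log_one_add_div {A : ℝ} (hA : 0 ≤ A) :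
    ConcaveOn ℝ (Ioi 0) fun z : ℝ => z * log (1 + A / z) := by
  refine concaveOn_of_hasDerivAt2_nonpos (convex_Ioi 0) isOpen_Ioi
    (f' := fun z => log (1 + A / z) - A / (z + A)) (f'' := fun z => -(A ^ 2 / (z * (z + A) ^ 2)))
    (fun z (hz : 0 < z) => ?_) (fun z (hz : 0 < z) => ?_)
    (fun z (hz : 0 < z) => by simp only [neg_nonpos]; positivity)
  · refine ((hasDerivAt_id z).mul (hasDerivAt_log_one_add_div hA hz)).congr_deriv ?_
    dsimp
    field_simp
    ring
  · have hzA : 0 < z + A := by positivity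
    refine ((hasDerivAt_log_one_add_div hA hz).sub
      ((hasDerivAt_const z A).div ((hasDerivAt_id z).add_const A) hzA.ne')).congr_deriv ?_
    dsimp
    field_simp
    ring

lemma hasDerivAt_log_one_add_mul_rpow {A α z : ℝ} (hA : 0 ≤ A) (hz : 0 < z) :
    HasDerivAt (fun z => log (1 + A * z ^ α)) (α * (A * z ^ α) / (z * (1 + A * z ^ α))) z := by
  have hpos : 0 < 1 + A * z ^ α := by positivity
  refine ((((Real.hasDerivAt_rpow_const (p := α) (Or.inl hz.ne')).const_mul A).const_add 1).log
    hpos.ne').congr_deriv ?_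
  rw [rpow_sub_one hz.ne']
  field_simp

lemma hasDerivAt_mul_rpow_div {A α z : ℝ} (hA : 0 ≤ A) (hz : 0 < z) :
    HasDerivAt (fun z => α * (A * z ^ α) / (z * (1 + A * z ^ α)))
      (α * (A * z ^ α) * (α - 1 - A * z ^ α) / (z * (1 + A * z ^ α)) ^ 2) z := by
  have hpow : HasDerivAt (fun z => A * z ^ α) (A * (α * z ^ (α - 1))) z :=
    (Real.hasDerivAt_rpow_const (Or.inl hz.ne')).const_mul A
  have hpos : 0 < z * (1 + A * z ^ α) := by positivity
  refine ((hpow.const_mul α).div ((hasDerivAt_id z).mul (hpow.const_add 1))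
    hpos.ne').congr_deriv ?_
  rw [rpow_sub_one hz.ne']
  dsimp
  field_simp
  ring

lemma convexOn_sub_one_div_of_hasDerivAt2 {D : Set ℝ} {L L' L'' : ℝ → ℝ} (hD : Convex ℝ D)
    (hDo : IsOpen D) (hL : ∀ z ∈ D, HasDerivAt L (L' z) z)
    (hL' : ∀ z ∈ D, HasDerivAt L' (L'' z) z) (hL₀ : ∀ z ∈ D, 0 < L z)
    (h : ∀ z ∈ D, L z * (2 * L' z + (z - 1) * L'' z) ≤ 2 * (z - 1) * L' z ^ 2) :
    ConvexOn ℝ D fun z => (z - 1) / L z := by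
  refine convexOn_of_hasDerivAt2_nonneg hD hDo
    (f' := fun z => (L z - (z - 1) * L' z) / L z ^ 2)
    (f'' := fun z => (2 * (z - 1) * L' z ^ 2 - L z * (2 * L' z + (z - 1) * L'' z)) / L z ^ 3)
    (fun z hz => ?_) (fun z hz => ?_)
    (fun z hz => div_nonneg (sub_nonneg.mpr (h z hz)) (pow_pos (hL₀ z hz) 3).le)
  · refine (((hasDerivAt_id z).sub_const 1).div (hL z hz) (hL₀ z hz).ne').congr_deriv ?_
    dsimp
    ring
  · have hLz := hL₀ z hz
    refine (((hL z hz).sub (((hasDerivAt_id z).sub_const 1).mul (hL' z hz))).div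
      ((hL z hz).pow 2) (pow_pos hLz 2).ne').congr_deriv ?_
    dsimp
    field_simp
    ring

lemma convexOn_sub_one_div_log_one_add_mul_rpow {A α : ℝ} (hA : 0 < A) (hα₁ : -1 ≤ α)
    (hα₀ : α ≤ 0) : ConvexOn ℝ (Ioi 0) fun z : ℝ => (z - 1) / log (1 + A * z ^ α) := by
  refine convexOn_sub_one_div_of_hasDerivAt2 (convex_Ioi 0) isOpen_Ioi
    (fun z (hz : 0 < z) => hasDerivAt_log_one_add_mul_rpow hA.le hz)
    (fun z (hz : 0 < z) => hasDerivAt_mul_rpow_div hA.le hz)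
    (fun z (hz : 0 < z) => log_pos (by simp only [lt_add_iff_pos_right]; positivity))
    (fun z (hz : 0 < z) => ?_)
  set u := A * z ^ α
  set L := log (1 + u)
  have hu : 0 < u := by positivity
  have hL_le : L ≤ u := by linarith [log_le_sub_one_of_pos (by positivity : 0 < 1 + u)]
  have hL_ge : 2 * u / (u + 2) ≤ L := le_log_one_add_of_nonneg hu.le
  rw [div_le_iff₀ (by positivity)] at hL_ge
  have hcoef : α * (z - 1) ≤ z + 1 := by nlinarith
  have hnum : 0 ≤ (z + 1) * (1 + u) * L + α * (z - 1) * (L - 2 * u) := by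
    nlinarith [mul_le_mul_of_nonpos_right hcoef (by linarith : L - 2 * u ≤ 0)]
  have hsecond : 2 * (z - 1) * (α * u / (z * (1 + u))) ^ 2 - L * (2 * (α * u / (z * (1 + u)))
      + (z - 1) * (α * u * (α - 1 - u) / (z * (1 + u)) ^ 2))
      = -α * u * ((z + 1) * (1 + u) * L + α * (z - 1) * (L - 2 * u)) / (z * (1 + u)) ^ 2 := by
    field_simp
    ring
  have hα : 0 ≤ -α := by linarith
  have : 0 ≤ -α * u * ((z + 1) * (1 + u) * L + α * (z - 1) * (L - 2 * u))
      / (z * (1 + u)) ^ 2 := by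
    positivity
  linarith

lemma convexOn_inv_mul_log_one_add_div {A : ℝ} (hA : 0 < A) :
    ConvexOn ℝ (Ioi 0) fun z : ℝ => (z * log (1 + A / z))⁻¹ :=
  (concaveOn_mul_log_one_add_div hA.le).convexOn_inv fun z (hz : 0 < z) =>
    mul_pos hz (log_pos (by simp only [lt_add_iff_pos_right]; positivity))

theorem lifetime_denominator_strictly_convex
    (c₀ c₁ c₂ c₃ A₁ A₂ γ : ℝ)
    (hc₁ : c₁ > 0) (hc₂ : c₂ > 0) (hc₃ : c₃ > 0)
    (hA₁ : A₁ > 0) (hA₂ : A₂ > 0)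
    (hγ₁ : 2 ≤ γ) (hγ₂ : γ ≤ 4) :
    StrictConvexOn ℝ (Set.Ioi (0:ℝ))
      (fun z : ℝ => c₀ + c₁ / z
        + c₂ * (z - 1) / Real.log (1 + A₁ * z ^ (1 - γ / 2))
        + c₃ / (z * Real.log (1 + A₂ / z))) := by
  have hmiddle :
      ConvexOn ℝ (Ioi 0) fun z : ℝ => c₂ * (z - 1) / log (1 + A₁ * z ^ (1 - γ / 2)) := by
    simpa only [smul_eq_mul, mul_div_assoc] using
      (convexOn_sub_one_div_log_one_add_mul_rpow hA₁ (by linarith) (by linarith)).smul hc₂.le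
  have hlast : ConvexOn ℝ (Ioi 0) fun z : ℝ => c₃ / (z * log (1 + A₂ / z)) := by
    simpa only [smul_eq_mul, div_eq_mul_inv] using
      (convexOn_inv_mul_log_one_add_div hA₂).smul hc₃.le
  exact ((strictConvexOn_const_add_div c₀ hc₁).add_convexOn hmiddle).add_convexOn hlast
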